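/- Let K(t,x) = (λ²/4) I₀(√(λ²((κt)² − x²)/(2κ))) for |x| ≤ κt and 0 otherwise. Then for all t ≥ 0 and x ∈ ℝ: ∫_ℝ K(t,x) dx = |λ|√(κ/2) · sinh(|λ|√(κ/2) t). -/

import Mathlib

open Real MeasureTheory

/-- Modified Bessel function of the first kind of order zero:
`I₀(z) = Σ_{k≥0} (z²/4)ᵏ/(k!)²`. -/
noncomputable def besselI0 (z : ℝ) : ℝ :=
  ∑' k : ℕ, (z ^ 2 / 4) ^ k / (k.factorial : ℝ) ^ 2

/-- `K(t,x) = (λ²/4) I₀(√(λ²((κt)² − x²)/(2κ)))` on `|x| ≤ κt`, zero otherwise. -/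
noncomputable def Kker (κ lam t x : ℝ) : ℝ :=
  if |x| ≤ κ * t then
    lam ^ 2 / 4 * besselI0 (Real.sqrt (lam ^ 2 * ((κ * t) ^ 2 - x ^ 2) / (2 * κ)))
  else 0

/-!
Expanding `I₀` in its power series, the `k`-th term of `s² I₀(s√(a² - x²))` integrates over
`[-a, a]` to `2s (sa)^(2k+1)/(2k+1)!`, because `∫_{-a}^{a} (a² - x²)ᵏ = 2·4ᵏ(k!)² a^(2k+1)/(2k+1)!`
(integration by parts gives the recursion in `k`). Summing the odd part of the exponential series,
which is legitimate by dominated convergence since the terms are bounded by those of `s² I₀(sa)`,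
gives `∫_{-a}^{a} s² I₀(s√(a² - x²)) dx = 2s sinh(sa)`; the kernel is `κ/2` times this integrand
with `s = |λ|√(κ/2)/κ` and `a = κt`.
-/

open scoped Nat Interval

lemma summable_pow_div_factorial_sq (y : ℝ) : Summable fun k : ℕ => y ^ k / (k ! : ℝ) ^ 2 := by
  refine (Real.summable_pow_div_factorial |y|).of_norm_bounded fun k => ?_
  have hk : (1 : ℝ) ≤ k ! := by exact_mod_cast k.factorial_pos
  rw [norm_div, norm_pow, Real.norm_eq_abs, norm_pow, Real.norm_natCast, sq]
  exact div_le_div_of_nonneg_left (by positivity) (by positivity) (le_mul_of_one_le_left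
    (by positivity) hk)

lemma hasSum_besselI0 (z : ℝ) :
    HasSum (fun k : ℕ => (z ^ 2 / 4) ^ k / (k ! : ℝ) ^ 2) (besselI0 z) :=
  (summable_pow_div_factorial_sq _).hasSum

lemma integral_sub_sq_pow_succ (a : ℝ) (k : ℕ) :
    (2 * k + 3) * ∫ x in -a..a, (a ^ 2 - x ^ 2) ^ (k + 1)
      = 2 * (k + 1) * a ^ 2 * ∫ x in -a..a, (a ^ 2 - x ^ 2) ^ k := by
  have hderiv : ∀ x ∈ Set.uIcc (-a) a, HasDerivAt (fun x : ℝ => x * (a ^ 2 - x ^ 2) ^ (k + 1))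
      ((2 * k + 3) * (a ^ 2 - x ^ 2) ^ (k + 1) - 2 * (k + 1) * a ^ 2 * (a ^ 2 - x ^ 2) ^ k) x := by
    intro x _
    refine ((hasDerivAt_id' x).mul
      (((hasDerivAt_pow 2 x).const_sub (a ^ 2)).pow (k + 1))).congr_deriv ?_
    simp only [Pi.pow_apply, Nat.add_sub_cancel]
    push_cast
    ring
  have hftc := intervalIntegral.integral_eq_sub_of_hasDerivAt hderiv
    ((by fun_prop : Continuous _).intervalIntegrable _ _)
  rw [intervalIntegral.integral_sub, intervalIntegral.integral_const_mul,
    intervalIntegral.integral_const_mul] at hftc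
  · simp only [neg_sq, sub_self, ne_eq, add_eq_zero, one_ne_zero, and_false, not_false_eq_true,
      zero_pow, mul_zero] at hftc
    linarith
  all_goals exact (by fun_prop : Continuous _).intervalIntegrable _ _

lemma integral_sub_sq_pow (a : ℝ) (k : ℕ) :
    ∫ x in -a..a, (a ^ 2 - x ^ 2) ^ k
      = 2 * 4 ^ k * (k ! : ℝ) ^ 2 * a ^ (2 * k + 1) / (2 * k + 1)! := by
  induction k with
  | zero => simp; ring
  | succ k ih =>
    have hrec := integral_sub_sq_pow_succ a k
    rw [ih] at hrec
    have hfact : ((2 * (k + 1) + 1)! : ℝ) = (2 * k + 3) * (2 * k + 2) * (2 * k + 1)! := by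
      rw [show 2 * (k + 1) + 1 = 2 * k + 1 + 1 + 1 by ring, Nat.factorial_succ, Nat.factorial_succ]
      push_cast
      ring
    have hI : ∫ x in -a..a, (a ^ 2 - x ^ 2) ^ (k + 1)
        = 2 * (k + 1) * a ^ 2 * (2 * 4 ^ k * (k ! : ℝ) ^ 2 * a ^ (2 * k + 1) / (2 * k + 1)!)
          / (2 * k + 3) := by
      rw [← hrec]
      field_simp
    rw [hI, hfact, Nat.factorial_succ k]
    push_cast
    field_simp
    ring

lemma integral_sq_mul_besselI0_term (s a : ℝ) (k : ℕ) :
    ∫ x in -a..a, s ^ 2 * ((s ^ 2 * (a ^ 2 - x ^ 2) / 4) ^ k / (k ! : ℝ) ^ 2)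
      = 2 * s * ((s * a) ^ (2 * k + 1) / (2 * k + 1)!) := by
  have hpoly : (fun x : ℝ => s ^ 2 * ((s ^ 2 * (a ^ 2 - x ^ 2) / 4) ^ k / (k ! : ℝ) ^ 2))
      = fun x => s ^ 2 * (s ^ 2 / 4) ^ k / (k ! : ℝ) ^ 2 * (a ^ 2 - x ^ 2) ^ k := by
    funext x
    rw [mul_div_right_comm, mul_pow]
    ring
  rw [hpoly, intervalIntegral.integral_const_mul, integral_sub_sq_pow, div_pow]
  field_simp
  ring

theorem integral_sq_mul_besselI0_sqrt (s a : ℝ) :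
    ∫ x in -a..a, s ^ 2 * besselI0 (s * √(a ^ 2 - x ^ 2)) = 2 * s * sinh (s * a) := by
  have hmem : ∀ x ∈ Ι (-a) a, 0 ≤ a ^ 2 - x ^ 2 := by
    intro x hx
    rcases Set.mem_uIoc.1 hx with h | h <;> nlinarith
  have hseries := intervalIntegral.hasSum_integral_of_dominated_convergence
    (F := fun k x => s ^ 2 * ((s ^ 2 * (a ^ 2 - x ^ 2) / 4) ^ k / (k ! : ℝ) ^ 2))
    (f := fun x => s ^ 2 * besselI0 (s * √(a ^ 2 - x ^ 2))) (μ := volume)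
    (fun k _ => s ^ 2 * ((s ^ 2 * a ^ 2 / 4) ^ k / (k ! : ℝ) ^ 2))
    (fun k => (by fun_prop : Continuous _).aestronglyMeasurable)
    (fun k => .of_forall fun x hx => by
      have := hmem x hx
      rw [Real.norm_of_nonneg (by positivity)]
      gcongr
      linarith [sq_nonneg x])
    (.of_forall fun x _ => (summable_pow_div_factorial_sq _).mul_left _)
    intervalIntegrable_const
    (.of_forall fun x hx => by
      have hsq : (s * √(a ^ 2 - x ^ 2)) ^ 2 = s ^ 2 * (a ^ 2 - x ^ 2) := by
        rw [mul_pow, sq_sqrt (hmem x hx)]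
      have h := (hasSum_besselI0 (s * √(a ^ 2 - x ^ 2))).mul_left (s ^ 2)
      rw [hsq] at h
      exact h)
  simp only [integral_sq_mul_besselI0_term] at hseries
  exact hseries.unique ((hasSum_sinh (s * a)).mul_left (2 * s))

lemma Kker_eq_indicator {κ : ℝ} (hκ : 0 < κ) (lam t : ℝ) :
    Kker κ lam t = (Set.Icc (-(κ * t)) (κ * t)).indicator fun x =>
      κ / 2 * ((|lam| * √(κ / 2) / κ) ^ 2
        * besselI0 (|lam| * √(κ / 2) / κ * √((κ * t) ^ 2 - x ^ 2))) := by
  set s := |lam| * √(κ / 2) / κ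
  have hs2 : s ^ 2 = lam ^ 2 / (2 * κ) := by
    rw [div_pow, mul_pow, sq_abs, sq_sqrt (by positivity)]
    field_simp
  have hsqrt (y : ℝ) : √(lam ^ 2 * y / (2 * κ)) = s * √y := by
    rw [mul_div_right_comm, ← hs2, sqrt_mul (sq_nonneg s), sqrt_sq (by positivity)]
  have hcoef : lam ^ 2 / 4 = κ / 2 * s ^ 2 := by
    rw [hs2]
    field_simp
    ring
  funext x
  simp only [Kker, Set.indicator, Set.mem_Icc, ← abs_le, hsqrt, hcoef, mul_assoc]

theorem Kker_space_integral (κ lam t : ℝ) (hκ : 0 < κ) (ht : 0 ≤ t) :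
    ∫ x : ℝ, Kker κ lam t x
      = |lam| * Real.sqrt (κ / 2) * Real.sinh (|lam| * Real.sqrt (κ / 2) * t) := by
  rw [Kker_eq_indicator hκ, integral_indicator measurableSet_Icc, integral_Icc_eq_integral_Ioc,
    ← intervalIntegral.integral_of_le (by nlinarith), intervalIntegral.integral_const_mul,
    integral_sq_mul_besselI0_sqrt]
  field_simp
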